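/- arXiv:2601.15388 — 3 statements merged into one kernel-verified Lean document; each statement's English description precedes it below -/
import Mathlib

section
/- Let (S₁,S₂,I₁,I₂,R₁,R₂,D₁,D₂) be a solution of the two-group active-population SIRD model on [0,∞) with initial data Sᵢ₀ := Sᵢ(0) > 0, Iᵢ₀ := Iᵢ(0) ≥ 0, Rᵢ₀ := Rᵢ(0) ≥ 0, all compartments remaining nonnegative and bounded, Sᵢ(t) > 0 and Nᵢ(t) > 0 for all t ≥ 0, and suppose the compartment limits as t → ∞ exist with lim Iᵢ(t) = 0. Then the final susceptible state S^∞ = (S₁^∞, S₂^∞), Sᵢ^∞ = lim_{t→∞} Sᵢ(t), satisfies S^∞ = T(S^∞) and 0 < Sᵢ^∞ ≤ Sᵢ₀ for i = 1,2; that is, S^∞ is a fixed point of the map T in [0,S₁₀]×[0,S₂₀]. -/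
open Filter

noncomputable def Tmap (β11 β12 β21 β22 μ1 μ2 S10 S20 ε1 ε2 Z1 Z2 N10 N20 : ℝ) :
    ℝ × ℝ → ℝ × ℝ := fun X =>
  (S10 * ((ε1 * X.1 + Z1) / N10) ^ (β11 / μ1) * ((ε2 * X.2 + Z2) / N20) ^ (β12 / μ2),
   S20 * ((ε1 * X.1 + Z1) / N10) ^ (β21 / μ1) * ((ε2 * X.2 + Z2) / N20) ^ (β22 / μ2))

/-!
The active population `Nᵢ = Sᵢ + Iᵢ + Rᵢ` satisfies `Nᵢ' = -μᵢ Iᵢ`, so `γᵢ Nᵢ + μᵢ Rᵢ` is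
conserved; with `Iᵢ → 0` this pins down `Nᵢ(∞) = εᵢ Sᵢ(∞) + Zᵢ > 0`. Along the flow,
`log Sᵢ - (βᵢ₁/μ₁) log N₁ - (βᵢ₂/μ₂) log N₂` is conserved, i.e.
`Sᵢ(t) = Sᵢ(0) (N₁(t)/N₁(0))^(βᵢ₁/μ₁) (N₂(t)/N₂(0))^(βᵢ₂/μ₂)`; letting `t → ∞` gives the
fixed-point equation `S(∞) = T(S(∞))` and `Sᵢ(∞) > 0`, while `Sᵢ' ≤ 0` gives `Sᵢ(∞) ≤ Sᵢ(0)`.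
-/

open Set Real Topology

lemma eq_apply_zero_of_hasDerivAt_zero {f : ℝ → ℝ} (hf : ∀ t ≥ 0, HasDerivAt f 0 t) :
    ∀ t ≥ 0, f t = f 0 := fun t ht =>
  constant_of_has_deriv_right_zero (fun x hx => (hf x hx.1).continuousAt.continuousWithinAt)
    (fun x hx => (hf x hx.1).hasDerivWithinAt) t ⟨ht, le_rfl⟩

lemma le_apply_zero_of_tendsto_of_hasDerivAt_nonpos {f f' : ℝ → ℝ} {L : ℝ}
    (hf : ∀ t ≥ 0, HasDerivAt f (f' t) t) (hf' : ∀ t ≥ 0, f' t ≤ 0)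
    (hL : Tendsto f atTop (𝓝 L)) : L ≤ f 0 := by
  have hanti : AntitoneOn f (Ici 0) := by
    refine antitoneOn_of_hasDerivWithinAt_nonpos (f' := f') (convex_Ici 0)
      (fun t ht => (hf t ht).continuousAt.continuousWithinAt) (fun t ht => ?_) (fun t ht => ?_)
    all_goals rw [interior_Ici] at ht
    exacts [(hf t ht.le).hasDerivWithinAt, hf' t ht.le]
  exact le_of_tendsto hL ((eventually_ge_atTop 0).mono fun t ht => hanti self_mem_Ici ht ht)

section ActivePopulation

variable {S I R N : ℝ → ℝ} {γ μ : ℝ}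

lemma hasDerivAt_activePopulation (hN : ∀ t, N t = S t + I t + R t) {t f : ℝ}
    (hS : HasDerivAt S (-f * S t) t) (hI : HasDerivAt I (f * S t - (γ + μ) * I t) t)
    (hR : HasDerivAt R (γ * I t) t) : HasDerivAt N (-(μ * I t)) t := by
  rw [show N = S + I + R from funext hN]
  exact ((hS.add hI).add hR).congr_deriv (by ring)

/-- The paper's `ε s + Z`, with `ε = μ / (γ + μ)` and `Z = (1 - ε) n + ε r`. -/
noncomputable def finalPopulation (γ μ s n r : ℝ) : ℝ :=
  μ / (γ + μ) * s + ((1 - μ / (γ + μ)) * n + μ / (γ + μ) * r)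

lemma finalPopulation_pos {s n r : ℝ} (hγ : 0 < γ) (hμ : 0 < μ) (hs : 0 ≤ s) (hn : 0 < n)
    (hr : 0 ≤ r) : 0 < finalPopulation γ μ s n r := by
  have hε : 1 - μ / (γ + μ) = γ / (γ + μ) := by field_simp; ring
  unfold finalPopulation
  rw [hε]
  positivity

lemma tendsto_activePopulation (hN : ∀ t, N t = S t + I t + R t)
    (hN' : ∀ t ≥ 0, HasDerivAt N (-(μ * I t)) t) (hR' : ∀ t ≥ 0, HasDerivAt R (γ * I t) t)
    (hγμ : γ + μ ≠ 0) {s : ℝ} (hS : Tendsto S atTop (𝓝 s)) (hI : Tendsto I atTop (𝓝 0)) :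
    Tendsto N atTop (𝓝 (finalPopulation γ μ s (N 0) (R 0))) := by
  have hconst : ∀ t ≥ 0, γ * N t + μ * R t = γ * N 0 + μ * R 0 :=
    eq_apply_zero_of_hasDerivAt_zero (f := fun t => γ * N t + μ * R t) fun t ht =>
      (((hN' t ht).const_mul γ).add ((hR' t ht).const_mul μ)).congr_deriv (by ring)
  have hlim : Tendsto (fun t => (γ * N 0 + μ * R 0 + μ * (S t + I t)) / (γ + μ)) atTop
      (𝓝 ((γ * N 0 + μ * R 0 + μ * (s + 0)) / (γ + μ))) :=
    ((hS.add hI).const_mul μ |>.const_add _).div_const _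
  convert hlim.congr' ((eventually_ge_atTop 0).mono fun t ht => ?_) using 2
  · unfold finalPopulation
    field_simp
    ring
  · rw [div_eq_iff hγμ, ← hconst t ht, hN]
    ring

end ActivePopulation

section Susceptible

variable {S N₁ N₂ I₁ I₂ : ℝ → ℝ} {b₁ b₂ μ₁ μ₂ : ℝ}

lemma susceptible_eq_mul_rpow (hμ₁ : μ₁ ≠ 0) (hμ₂ : μ₂ ≠ 0)
    (hS : ∀ t ≥ 0, HasDerivAt S (-(b₁ * I₁ t / N₁ t + b₂ * I₂ t / N₂ t) * S t) t)
    (hN₁ : ∀ t ≥ 0, HasDerivAt N₁ (-(μ₁ * I₁ t)) t) (hN₂ : ∀ t ≥ 0, HasDerivAt N₂ (-(μ₂ * I₂ t)) t)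
    (hSpos : ∀ t ≥ 0, 0 < S t) (hN₁pos : ∀ t ≥ 0, 0 < N₁ t) (hN₂pos : ∀ t ≥ 0, 0 < N₂ t) :
    ∀ t ≥ 0, S t = S 0 * (N₁ t / N₁ 0) ^ (b₁ / μ₁) * (N₂ t / N₂ 0) ^ (b₂ / μ₂) := by
  have hconst := eq_apply_zero_of_hasDerivAt_zero
    (f := fun t => log (S t) - b₁ / μ₁ * log (N₁ t) - b₂ / μ₂ * log (N₂ t)) fun t ht =>
      ((((hS t ht).log (hSpos t ht).ne').sub
        (((hN₁ t ht).log (hN₁pos t ht).ne').const_mul (b₁ / μ₁))).sub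
        (((hN₂ t ht).log (hN₂pos t ht).ne').const_mul (b₂ / μ₂))).congr_deriv (by
          field_simp [(hSpos t ht).ne']
          ring)
  intro t ht
  have hN₁0 := hN₁pos 0 le_rfl
  have hN₂0 := hN₂pos 0 le_rfl
  calc S t = exp (log (S t)) := (exp_log (hSpos t ht)).symm
    _ = exp (log (S 0) + (log (N₁ t) - log (N₁ 0)) * (b₁ / μ₁)
          + (log (N₂ t) - log (N₂ 0)) * (b₂ / μ₂)) := by
      congr 1
      linarith [hconst t ht]
    _ = S 0 * (N₁ t / N₁ 0) ^ (b₁ / μ₁) * (N₂ t / N₂ 0) ^ (b₂ / μ₂) := by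
      rw [exp_add, exp_add, exp_log (hSpos 0 le_rfl), rpow_def_of_pos (div_pos (hN₁pos t ht) hN₁0),
        rpow_def_of_pos (div_pos (hN₂pos t ht) hN₂0), log_div (hN₁pos t ht).ne' hN₁0.ne',
        log_div (hN₂pos t ht).ne' hN₂0.ne']

lemma susceptible_limit_eq_mul_rpow (hb₁ : 0 ≤ b₁) (hb₂ : 0 ≤ b₂) (hμ₁ : 0 < μ₁) (hμ₂ : 0 < μ₂)
    (hS : ∀ t ≥ 0, HasDerivAt S (-(b₁ * I₁ t / N₁ t + b₂ * I₂ t / N₂ t) * S t) t)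
    (hN₁ : ∀ t ≥ 0, HasDerivAt N₁ (-(μ₁ * I₁ t)) t) (hN₂ : ∀ t ≥ 0, HasDerivAt N₂ (-(μ₂ * I₂ t)) t)
    (hSpos : ∀ t ≥ 0, 0 < S t) (hN₁pos : ∀ t ≥ 0, 0 < N₁ t) (hN₂pos : ∀ t ≥ 0, 0 < N₂ t)
    {s n₁ n₂ : ℝ} (hSlim : Tendsto S atTop (𝓝 s)) (hN₁lim : Tendsto N₁ atTop (𝓝 n₁))
    (hN₂lim : Tendsto N₂ atTop (𝓝 n₂)) :
    s = S 0 * (n₁ / N₁ 0) ^ (b₁ / μ₁) * (n₂ / N₂ 0) ^ (b₂ / μ₂) := by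
  have hlim := ((hN₁lim.div_const (N₁ 0)).rpow_const (p := b₁ / μ₁) (.inr (by positivity))).const_mul
    (S 0) |>.mul ((hN₂lim.div_const (N₂ 0)).rpow_const (p := b₂ / μ₂) (.inr (by positivity)))
  exact tendsto_nhds_unique hSlim (hlim.congr' ((eventually_ge_atTop 0).mono fun t ht =>
    (susceptible_eq_mul_rpow hμ₁.ne' hμ₂.ne' hS hN₁ hN₂ hSpos hN₁pos hN₂pos t ht).symm))

lemma susceptible_limit_le (hb₁ : 0 ≤ b₁) (hb₂ : 0 ≤ b₂)
    (hS : ∀ t ≥ 0, HasDerivAt S (-(b₁ * I₁ t / N₁ t + b₂ * I₂ t / N₂ t) * S t) t)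
    (hI₁ : ∀ t ≥ 0, 0 ≤ I₁ t) (hI₂ : ∀ t ≥ 0, 0 ≤ I₂ t) (hSpos : ∀ t ≥ 0, 0 < S t)
    (hN₁pos : ∀ t ≥ 0, 0 < N₁ t) (hN₂pos : ∀ t ≥ 0, 0 < N₂ t) {s : ℝ}
    (hSlim : Tendsto S atTop (𝓝 s)) : s ≤ S 0 :=
  le_apply_zero_of_tendsto_of_hasDerivAt_nonpos hS (fun t ht => by
    have := hI₁ t ht; have := hI₂ t ht; have := hSpos t ht
    have := hN₁pos t ht; have := hN₂pos t ht
    rw [neg_mul, neg_nonpos]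
    positivity) hSlim

end Susceptible

theorem stmt_7_general
    (β11 β12 β21 β22 γ1 γ2 μ1 μ2 : ℝ)
    (hβ11 : 0 < β11) (hβ12 : 0 < β12) (hβ21 : 0 < β21) (hβ22 : 0 < β22)
    (hγ1 : 0 < γ1) (hγ2 : 0 < γ2) (hμ1 : 0 < μ1) (hμ2 : 0 < μ2)
    (S1 S2 I1 I2 R1 R2 D1 D2 N1 N2 : ℝ → ℝ)
    (hN1 : ∀ t, N1 t = S1 t + I1 t + R1 t)
    (hN2 : ∀ t, N2 t = S2 t + I2 t + R2 t)
    (hS1' : ∀ t ≥ (0:ℝ), HasDerivAt S1 (-(β11 * I1 t / N1 t + β12 * I2 t / N2 t) * S1 t) t)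
    (hS2' : ∀ t ≥ (0:ℝ), HasDerivAt S2 (-(β21 * I1 t / N1 t + β22 * I2 t / N2 t) * S2 t) t)
    (hI1' : ∀ t ≥ (0:ℝ), HasDerivAt I1 ((β11 * I1 t / N1 t + β12 * I2 t / N2 t) * S1 t - (γ1 + μ1) * I1 t) t)
    (hI2' : ∀ t ≥ (0:ℝ), HasDerivAt I2 ((β21 * I1 t / N1 t + β22 * I2 t / N2 t) * S2 t - (γ2 + μ2) * I2 t) t)
    (hR1' : ∀ t ≥ (0:ℝ), HasDerivAt R1 (γ1 * I1 t) t)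
    (hR2' : ∀ t ≥ (0:ℝ), HasDerivAt R2 (γ2 * I2 t) t)
    (hR10 : 0 ≤ R1 0) (hR20 : 0 ≤ R2 0)
    (hnn1 : ∀ t ≥ (0:ℝ), 0 ≤ S1 t ∧ 0 ≤ I1 t ∧ 0 ≤ R1 t ∧ 0 ≤ D1 t)
    (hnn2 : ∀ t ≥ (0:ℝ), 0 ≤ S2 t ∧ 0 ≤ I2 t ∧ 0 ≤ R2 t ∧ 0 ≤ D2 t)
    (hS1pos : ∀ t ≥ (0:ℝ), 0 < S1 t)
    (hS2pos : ∀ t ≥ (0:ℝ), 0 < S2 t)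
    (hN1pos : ∀ t ≥ (0:ℝ), 0 < N1 t)
    (hN2pos : ∀ t ≥ (0:ℝ), 0 < N2 t)
    (ε1 ε2 Z1 Z2 : ℝ)
    (hε1 : ε1 = μ1 / (γ1 + μ1)) (hε2 : ε2 = μ2 / (γ2 + μ2))
    (hZ1 : Z1 = (1 - ε1) * N1 0 + ε1 * R1 0) (hZ2 : Z2 = (1 - ε2) * N2 0 + ε2 * R2 0)
    (T : ℝ × ℝ → ℝ × ℝ)
    (hT : T = Tmap β11 β12 β21 β22 μ1 μ2 (S1 0) (S2 0) ε1 ε2 Z1 Z2 (N1 0) (N2 0))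
    (S1inf S2inf : ℝ)
    (hS1inf : Tendsto S1 atTop (nhds S1inf)) (hS2inf : Tendsto S2 atTop (nhds S2inf))
    (hI1inf : Tendsto I1 atTop (nhds 0)) (hI2inf : Tendsto I2 atTop (nhds 0)) :
    T (S1inf, S2inf) = (S1inf, S2inf) ∧
    (0 < S1inf ∧ S1inf ≤ S1 0) ∧ (0 < S2inf ∧ S2inf ≤ S2 0) := by
  subst hT hZ1 hZ2 hε1 hε2
  have hN1' t (ht : t ≥ 0) := hasDerivAt_activePopulation hN1 (hS1' t ht) (hI1' t ht) (hR1' t ht)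
  have hN2' t (ht : t ≥ 0) := hasDerivAt_activePopulation hN2 (hS2' t ht) (hI2' t ht) (hR2' t ht)
  have hN1inf := tendsto_activePopulation hN1 hN1' hR1' (by positivity) hS1inf hI1inf
  have hN2inf := tendsto_activePopulation hN2 hN2' hR2' (by positivity) hS2inf hI2inf
  have hN1infpos := finalPopulation_pos hγ1 hμ1 (ge_of_tendsto hS1inf <|
    (eventually_ge_atTop 0).mono fun t ht => (hS1pos t ht).le) (hN1pos 0 le_rfl) hR10
  have hN2infpos := finalPopulation_pos hγ2 hμ2 (ge_of_tendsto hS2inf <|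
    (eventually_ge_atTop 0).mono fun t ht => (hS2pos t ht).le) (hN2pos 0 le_rfl) hR20
  have hS1lim := susceptible_limit_eq_mul_rpow hβ11.le hβ12.le hμ1 hμ2 hS1' hN1' hN2'
    hS1pos hN1pos hN2pos hS1inf hN1inf hN2inf
  have hS2lim := susceptible_limit_eq_mul_rpow hβ21.le hβ22.le hμ1 hμ2 hS2' hN1' hN2'
    hS2pos hN1pos hN2pos hS2inf hN1inf hN2inf
  have hI1 t (ht : t ≥ 0) := (hnn1 t ht).2.1
  have hI2 t (ht : t ≥ 0) := (hnn2 t ht).2.1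
  have hS10 := hS1pos 0 le_rfl
  have hS20 := hS2pos 0 le_rfl
  have hN10 := hN1pos 0 le_rfl
  have hN20 := hN2pos 0 le_rfl
  refine ⟨Prod.ext hS1lim.symm hS2lim.symm, ⟨?_, ?_⟩, ⟨?_, ?_⟩⟩
  · rw [hS1lim]; positivity
  · exact susceptible_limit_le hβ11.le hβ12.le hS1' hI1 hI2 hS1pos hN1pos hN2pos hS1inf
  · rw [hS2lim]; positivity
  · exact susceptible_limit_le hβ21.le hβ22.le hS2' hI1 hI2 hS2pos hN1pos hN2pos hS2inf

theorem stmt_7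
    (β11 β12 β21 β22 γ1 γ2 μ1 μ2 : ℝ)
    (hβ11 : 0 < β11) (hβ12 : 0 < β12) (hβ21 : 0 < β21) (hβ22 : 0 < β22)
    (hγ1 : 0 < γ1) (hγ2 : 0 < γ2) (hμ1 : 0 < μ1) (hμ2 : 0 < μ2)
    (S1 S2 I1 I2 R1 R2 D1 D2 N1 N2 : ℝ → ℝ)
    (hN1 : ∀ t, N1 t = S1 t + I1 t + R1 t)
    (hN2 : ∀ t, N2 t = S2 t + I2 t + R2 t)
    (hS1' : ∀ t ≥ (0:ℝ), HasDerivAt S1 (-(β11 * I1 t / N1 t + β12 * I2 t / N2 t) * S1 t) t)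
    (hS2' : ∀ t ≥ (0:ℝ), HasDerivAt S2 (-(β21 * I1 t / N1 t + β22 * I2 t / N2 t) * S2 t) t)
    (hI1' : ∀ t ≥ (0:ℝ), HasDerivAt I1 ((β11 * I1 t / N1 t + β12 * I2 t / N2 t) * S1 t - (γ1 + μ1) * I1 t) t)
    (hI2' : ∀ t ≥ (0:ℝ), HasDerivAt I2 ((β21 * I1 t / N1 t + β22 * I2 t / N2 t) * S2 t - (γ2 + μ2) * I2 t) t)
    (hR1' : ∀ t ≥ (0:ℝ), HasDerivAt R1 (γ1 * I1 t) t)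
    (hR2' : ∀ t ≥ (0:ℝ), HasDerivAt R2 (γ2 * I2 t) t)
    (hD1' : ∀ t ≥ (0:ℝ), HasDerivAt D1 (μ1 * I1 t) t)
    (hD2' : ∀ t ≥ (0:ℝ), HasDerivAt D2 (μ2 * I2 t) t)
    (hS10 : 0 < S1 0) (hS20 : 0 < S2 0)
    (hI10 : 0 ≤ I1 0) (hI20 : 0 ≤ I2 0)
    (hR10 : 0 ≤ R1 0) (hR20 : 0 ≤ R2 0)
    (hD10 : 0 ≤ D1 0) (hD20 : 0 ≤ D2 0)
    (hnn1 : ∀ t ≥ (0:ℝ), 0 ≤ S1 t ∧ 0 ≤ I1 t ∧ 0 ≤ R1 t ∧ 0 ≤ D1 t)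
    (hnn2 : ∀ t ≥ (0:ℝ), 0 ≤ S2 t ∧ 0 ≤ I2 t ∧ 0 ≤ R2 t ∧ 0 ≤ D2 t)
    (hbd : ∃ C : ℝ, ∀ t ≥ (0:ℝ), S1 t ≤ C ∧ I1 t ≤ C ∧ R1 t ≤ C ∧ D1 t ≤ C ∧
      S2 t ≤ C ∧ I2 t ≤ C ∧ R2 t ≤ C ∧ D2 t ≤ C)
    (hS1pos : ∀ t ≥ (0:ℝ), 0 < S1 t)
    (hS2pos : ∀ t ≥ (0:ℝ), 0 < S2 t)
    (hN1pos : ∀ t ≥ (0:ℝ), 0 < N1 t)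
    (hN2pos : ∀ t ≥ (0:ℝ), 0 < N2 t)
    (ε1 ε2 Z1 Z2 : ℝ)
    (hε1 : ε1 = μ1 / (γ1 + μ1)) (hε2 : ε2 = μ2 / (γ2 + μ2))
    (hZ1 : Z1 = (1 - ε1) * N1 0 + ε1 * R1 0) (hZ2 : Z2 = (1 - ε2) * N2 0 + ε2 * R2 0)
    (T : ℝ × ℝ → ℝ × ℝ)
    (hT : T = Tmap β11 β12 β21 β22 μ1 μ2 (S1 0) (S2 0) ε1 ε2 Z1 Z2 (N1 0) (N2 0))
    (S1inf S2inf : ℝ)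
    (hS1inf : Tendsto S1 atTop (nhds S1inf)) (hS2inf : Tendsto S2 atTop (nhds S2inf))
    (hI1inf : Tendsto I1 atTop (nhds 0)) (hI2inf : Tendsto I2 atTop (nhds 0))
    (hR1inf : ∃ l : ℝ, Tendsto R1 atTop (nhds l)) (hR2inf : ∃ l : ℝ, Tendsto R2 atTop (nhds l))
    (hD1inf : ∃ l : ℝ, Tendsto D1 atTop (nhds l)) (hD2inf : ∃ l : ℝ, Tendsto D2 atTop (nhds l)) :
    T (S1inf, S2inf) = (S1inf, S2inf) ∧
    (0 < S1inf ∧ S1inf ≤ S1 0) ∧ (0 < S2inf ∧ S2inf ≤ S2 0) :=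
  stmt_7_general β11 β12 β21 β22 γ1 γ2 μ1 μ2 hβ11 hβ12 hβ21 hβ22 hγ1 hγ2 hμ1 hμ2 S1 S2 I1 I2 R1 R2
    D1 D2 N1 N2 hN1 hN2 hS1' hS2' hI1' hI2' hR1' hR2' hR10 hR20 hnn1 hnn2 hS1pos hS2pos hN1pos
    hN2pos ε1 ε2 Z1 Z2 hε1 hε2 hZ1 hZ2 T hT S1inf S2inf hS1inf hS2inf hI1inf hI2inf
end

section
/- Let (S₁,S₂,I₁,I₂,R₁,R₂,D₁,D₂) be a solution of the two-group active-population SIRD model on [0,∞) with initial data Sᵢ₀ := Sᵢ(0) > 0, Iᵢ₀ := Iᵢ(0) ≥ 0, Rᵢ₀ := Rᵢ(0) ≥ 0, all compartments nonnegative and bounded, Sᵢ(t) > 0 and Nᵢ(t) > 0 for all t ≥ 0, and suppose the compartment limits as t → ∞ exist with lim Iᵢ(t) = 0. Let S⁻ = lim_{n→∞} Tⁿ(0,0) and S⁺ = lim_{n→∞} Tⁿ(S₁₀,S₂₀) (these limits exist). Then the final susceptible state S^∞ = (lim_{t→∞} S₁(t), lim_{t→∞} S₂(t)) satisfies the bracketing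 S⁻ ≤ S^∞ ≤ S⁺ componentwise. -/
/-! Along a solution `N_j' = -μ_j I_j`, so `log S_i - ∑_j (β_ij / μ_j) log N_j` is constant, i.e.
`S_i(t) = S_i(0) ∏_j (N_j(t) / N_j(0)) ^ (β_ij / μ_j)`, and `μ_j R_j + γ_j N_j` is constant, which
together with `I_j → 0` gives `N_j(∞) = ε_j S_j(∞) + Z_j`. Hence `S^∞` is a fixed point of `T`.
As `T` is monotone on the nonnegative quadrant and maps it into itself, and `0 ≤ S^∞ ≤ S(0)`
because `S` is nonincreasing, induction gives `Tⁿ(0, 0) ≤ S^∞ ≤ Tⁿ(S(0))`; let `n → ∞`. -/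

open Filter Set Topology Function Real

theorem MonotoneOn.iterate_le_of_isFixedPt {α : Type*} [Preorder α] {f : α → α} {s : Set α}
    (hf : MonotoneOn f s) (hs : MapsTo f s s) {a x : α} (ha : a ∈ s) (hx : x ∈ s)
    (hfx : IsFixedPt f x) (hax : a ≤ x) (n : ℕ) : f^[n] a ≤ x := by
  induction n with
  | zero => exact hax
  | succ n ih => rw [iterate_succ_apply', ← hfx.eq]; exact hf (hs.iterate n ha) hx ih

theorem MonotoneOn.le_iterate_of_isFixedPt {α : Type*} [Preorder α] {f : α → α} {s : Set α}
    (hf : MonotoneOn f s) (hs : MapsTo f s s) {b x : α} (hb : b ∈ s) (hx : x ∈ s)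
    (hfx : IsFixedPt f x) (hxb : x ≤ b) (n : ℕ) : x ≤ f^[n] b := by
  induction n with
  | zero => exact hxb
  | succ n ih => rw [iterate_succ_apply', ← hfx.eq]; exact hf hx (hs.iterate n hb) ih

theorem eq_of_hasDerivAt_zero_of_nonneg {g : ℝ → ℝ} (hg : ∀ t ≥ (0:ℝ), HasDerivAt g 0 t)
    {t : ℝ} (ht : 0 ≤ t) : g t = g 0 :=
  constant_of_has_deriv_right_zero (fun x hx => (hg x hx.1).continuousAt.continuousWithinAt)
    (fun x hx => (hg x hx.1).hasDerivWithinAt) t ⟨ht, le_rfl⟩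

theorem le_of_tendsto_of_hasDerivAt_nonpos {f f' : ℝ → ℝ} {l : ℝ}
    (hf : ∀ t ≥ (0:ℝ), HasDerivAt f (f' t) t) (hf' : ∀ t ≥ (0:ℝ), f' t ≤ 0)
    (hl : Tendsto f atTop (𝓝 l)) : l ≤ f 0 := by
  have hanti : AntitoneOn f (Ici 0) :=
    antitoneOn_of_hasDerivWithinAt_nonpos (convex_Ici 0)
      (fun t ht => (hf t ht).continuousAt.continuousWithinAt)
      (fun t ht => (hf t (interior_subset ht)).hasDerivWithinAt)
      (fun t ht => hf' t (interior_subset ht))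
  exact le_of_tendsto hl ((eventually_ge_atTop 0).mono fun t ht => hanti self_mem_Ici ht ht)

theorem hasDerivAt_active_population {S I R N : ℝ → ℝ} {F γ μ t : ℝ}
    (hN : ∀ t, N t = S t + I t + R t) (hS : HasDerivAt S (-F * S t) t)
    (hI : HasDerivAt I (F * S t - (γ + μ) * I t) t) (hR : HasDerivAt R (γ * I t) t) :
    HasDerivAt N (-(μ * I t)) t := by
  rw [funext hN]
  exact ((hS.add hI).add hR).congr_deriv (by ring)

theorem tendsto_active_population {S I R N : ℝ → ℝ} {γ μ s r : ℝ} (hγμ : γ + μ ≠ 0)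
    (hN : ∀ t, N t = S t + I t + R t)
    (hN' : ∀ t ≥ (0:ℝ), HasDerivAt N (-(μ * I t)) t) (hR' : ∀ t ≥ (0:ℝ), HasDerivAt R (γ * I t) t)
    (hS : Tendsto S atTop (𝓝 s)) (hI : Tendsto I atTop (𝓝 0)) (hR : Tendsto R atTop (𝓝 r)) :
    Tendsto N atTop (𝓝 (μ / (γ + μ) * s + ((1 - μ / (γ + μ)) * N 0 + μ / (γ + μ) * R 0))) := by
  have hconst : ∀ t ≥ (0:ℝ), μ * R t + γ * N t = μ * R 0 + γ * N 0 := fun t ht =>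
    eq_of_hasDerivAt_zero_of_nonneg
      (fun t ht => (((hR' t ht).const_mul μ).add ((hN' t ht).const_mul γ)).congr_deriv (by ring)) ht
  have hN_lim : Tendsto N atTop (𝓝 (s + r)) := by
    simpa [funext hN] using (hS.add hI).add hR
  have hconst_lim : μ * r + γ * (s + r) = μ * R 0 + γ * N 0 :=
    tendsto_nhds_unique ((hR.const_mul μ).add (hN_lim.const_mul γ))
      (tendsto_const_nhds.congr' ((eventually_ge_atTop 0).mono fun t ht => (hconst t ht).symm))
  convert hN_lim using 2
  field_simp
  linear_combination -hconst_lim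

theorem eq_mul_rpow_mul_rpow_of_hasDerivAt {S N₁ N₂ u₁ u₂ : ℝ → ℝ} {a₁ a₂ μ₁ μ₂ : ℝ}
    (hμ₁ : μ₁ ≠ 0) (hμ₂ : μ₂ ≠ 0)
    (hS : ∀ t ≥ (0:ℝ), HasDerivAt S (-(a₁ * u₁ t / N₁ t + a₂ * u₂ t / N₂ t) * S t) t)
    (hN₁ : ∀ t ≥ (0:ℝ), HasDerivAt N₁ (-(μ₁ * u₁ t)) t)
    (hN₂ : ∀ t ≥ (0:ℝ), HasDerivAt N₂ (-(μ₂ * u₂ t)) t)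
    (hS_pos : ∀ t ≥ (0:ℝ), 0 < S t) (hN₁_pos : ∀ t ≥ (0:ℝ), 0 < N₁ t)
    (hN₂_pos : ∀ t ≥ (0:ℝ), 0 < N₂ t) {t : ℝ} (ht : 0 ≤ t) :
    S t = S 0 * (N₁ t / N₁ 0) ^ (a₁ / μ₁) * (N₂ t / N₂ 0) ^ (a₂ / μ₂) := by
  have hlog : log (S t) - a₁ / μ₁ * log (N₁ t) - a₂ / μ₂ * log (N₂ t)
      = log (S 0) - a₁ / μ₁ * log (N₁ 0) - a₂ / μ₂ * log (N₂ 0) := by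
    refine eq_of_hasDerivAt_zero_of_nonneg
      (g := fun t => log (S t) - a₁ / μ₁ * log (N₁ t) - a₂ / μ₂ * log (N₂ t)) (fun t ht => ?_) ht
    have h := (((hS t ht).log (hS_pos t ht).ne').sub
      (((hN₁ t ht).log (hN₁_pos t ht).ne').const_mul (a₁ / μ₁))).sub
      (((hN₂ t ht).log (hN₂_pos t ht).ne').const_mul (a₂ / μ₂))
    refine h.congr_deriv ?_
    field_simp [(hS_pos t ht).ne', (hN₁_pos t ht).ne', (hN₂_pos t ht).ne']
    ring
  have hN₁0 := hN₁_pos 0 le_rfl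
  have hN₂0 := hN₂_pos 0 le_rfl
  have hb₁ : 0 < N₁ t / N₁ 0 := div_pos (hN₁_pos t ht) hN₁0
  have hb₂ : 0 < N₂ t / N₂ 0 := div_pos (hN₂_pos t ht) hN₂0
  have hS0 := hS_pos 0 le_rfl
  refine log_injOn_pos (mem_Ioi.2 (hS_pos t ht)) (mem_Ioi.2 (by positivity)) ?_
  rw [log_mul (by positivity) (by positivity), log_mul hS0.ne' (by positivity), log_rpow hb₁,
    log_rpow hb₂, log_div (hN₁_pos t ht).ne' hN₁0.ne', log_div (hN₂_pos t ht).ne' hN₂0.ne']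
  linear_combination hlog

theorem eq_mul_rpow_mul_rpow_of_tendsto {S N₁ N₂ u₁ u₂ : ℝ → ℝ} {a₁ a₂ μ₁ μ₂ s L₁ L₂ : ℝ}
    (ha₁ : 0 ≤ a₁) (ha₂ : 0 ≤ a₂) (hμ₁ : 0 < μ₁) (hμ₂ : 0 < μ₂)
    (hS : ∀ t ≥ (0:ℝ), HasDerivAt S (-(a₁ * u₁ t / N₁ t + a₂ * u₂ t / N₂ t) * S t) t)
    (hN₁ : ∀ t ≥ (0:ℝ), HasDerivAt N₁ (-(μ₁ * u₁ t)) t)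
    (hN₂ : ∀ t ≥ (0:ℝ), HasDerivAt N₂ (-(μ₂ * u₂ t)) t)
    (hS_pos : ∀ t ≥ (0:ℝ), 0 < S t) (hN₁_pos : ∀ t ≥ (0:ℝ), 0 < N₁ t)
    (hN₂_pos : ∀ t ≥ (0:ℝ), 0 < N₂ t) (hS_lim : Tendsto S atTop (𝓝 s))
    (hN₁_lim : Tendsto N₁ atTop (𝓝 L₁)) (hN₂_lim : Tendsto N₂ atTop (𝓝 L₂)) :
    s = S 0 * (L₁ / N₁ 0) ^ (a₁ / μ₁) * (L₂ / N₂ 0) ^ (a₂ / μ₂) :=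
  tendsto_nhds_unique hS_lim <| (tendsto_const_nhds.mul
    ((hN₁_lim.div_const _).rpow_const (.inr (div_nonneg ha₁ hμ₁.le)))).mul
    ((hN₂_lim.div_const _).rpow_const (.inr (div_nonneg ha₂ hμ₂.le))) |>.congr'
      ((eventually_ge_atTop 0).mono fun _ ht => (eq_mul_rpow_mul_rpow_of_hasDerivAt
        hμ₁.ne' hμ₂.ne' hS hN₁ hN₂ hS_pos hN₁_pos hN₂_pos ht).symm)

section Tmap

variable {β₁₁ β₁₂ β₂₁ β₂₂ μ₁ μ₂ S₁₀ S₂₀ ε₁ ε₂ Z₁ Z₂ N₁₀ N₂₀ : ℝ}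

theorem mapsTo_Tmap (hS₁₀ : 0 ≤ S₁₀) (hS₂₀ : 0 ≤ S₂₀) (hε₁ : 0 ≤ ε₁) (hε₂ : 0 ≤ ε₂)
    (hZ₁ : 0 ≤ Z₁) (hZ₂ : 0 ≤ Z₂) (hN₁₀ : 0 ≤ N₁₀) (hN₂₀ : 0 ≤ N₂₀) :
    MapsTo (Tmap β₁₁ β₁₂ β₂₁ β₂₂ μ₁ μ₂ S₁₀ S₂₀ ε₁ ε₂ Z₁ Z₂ N₁₀ N₂₀) (Ici 0) (Ici 0) := by
  rintro ⟨x₁, x₂⟩ ⟨hx₁ : 0 ≤ x₁, hx₂ : 0 ≤ x₂⟩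
  constructor <;> dsimp only [Tmap] <;> positivity

theorem monotoneOn_Tmap (hS₁₀ : 0 ≤ S₁₀) (hS₂₀ : 0 ≤ S₂₀) (hε₁ : 0 ≤ ε₁) (hε₂ : 0 ≤ ε₂)
    (hZ₁ : 0 ≤ Z₁) (hZ₂ : 0 ≤ Z₂) (hN₁₀ : 0 ≤ N₁₀) (hN₂₀ : 0 ≤ N₂₀)
    (h₁₁ : 0 ≤ β₁₁ / μ₁) (h₁₂ : 0 ≤ β₁₂ / μ₂) (h₂₁ : 0 ≤ β₂₁ / μ₁) (h₂₂ : 0 ≤ β₂₂ / μ₂) :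
    MonotoneOn (Tmap β₁₁ β₁₂ β₂₁ β₂₂ μ₁ μ₂ S₁₀ S₂₀ ε₁ ε₂ Z₁ Z₂ N₁₀ N₂₀) (Ici 0) := by
  rintro ⟨x₁, x₂⟩ ⟨hx₁ : 0 ≤ x₁, hx₂ : 0 ≤ x₂⟩ ⟨y₁, y₂⟩ ⟨hy₁ : 0 ≤ y₁, -⟩
    ⟨hxy₁ : x₁ ≤ y₁, hxy₂ : x₂ ≤ y₂⟩
  constructor <;> dsimp only [Tmap] <;> gcongr

end Tmap

theorem stmt_11_general
    (β11 β12 β21 β22 γ1 γ2 μ1 μ2 : ℝ)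
    (hβ11 : 0 < β11) (hβ12 : 0 < β12) (hβ21 : 0 < β21) (hβ22 : 0 < β22)
    (hγ1 : 0 < γ1) (hγ2 : 0 < γ2) (hμ1 : 0 < μ1) (hμ2 : 0 < μ2)
    (S1 S2 I1 I2 R1 R2 D1 D2 N1 N2 : ℝ → ℝ)
    (hN1 : ∀ t, N1 t = S1 t + I1 t + R1 t)
    (hN2 : ∀ t, N2 t = S2 t + I2 t + R2 t)
    (hS1' : ∀ t ≥ (0:ℝ), HasDerivAt S1 (-(β11 * I1 t / N1 t + β12 * I2 t / N2 t) * S1 t) t)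
    (hS2' : ∀ t ≥ (0:ℝ), HasDerivAt S2 (-(β21 * I1 t / N1 t + β22 * I2 t / N2 t) * S2 t) t)
    (hI1' : ∀ t ≥ (0:ℝ), HasDerivAt I1 ((β11 * I1 t / N1 t + β12 * I2 t / N2 t) * S1 t - (γ1 + μ1) * I1 t) t)
    (hI2' : ∀ t ≥ (0:ℝ), HasDerivAt I2 ((β21 * I1 t / N1 t + β22 * I2 t / N2 t) * S2 t - (γ2 + μ2) * I2 t) t)
    (hR1' : ∀ t ≥ (0:ℝ), HasDerivAt R1 (γ1 * I1 t) t)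
    (hR2' : ∀ t ≥ (0:ℝ), HasDerivAt R2 (γ2 * I2 t) t)
    (hS10 : 0 < S1 0) (hS20 : 0 < S2 0)
    (hR10 : 0 ≤ R1 0) (hR20 : 0 ≤ R2 0)
    (hnn1 : ∀ t ≥ (0:ℝ), 0 ≤ S1 t ∧ 0 ≤ I1 t ∧ 0 ≤ R1 t ∧ 0 ≤ D1 t)
    (hnn2 : ∀ t ≥ (0:ℝ), 0 ≤ S2 t ∧ 0 ≤ I2 t ∧ 0 ≤ R2 t ∧ 0 ≤ D2 t)
    (hS1pos : ∀ t ≥ (0:ℝ), 0 < S1 t)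
    (hS2pos : ∀ t ≥ (0:ℝ), 0 < S2 t)
    (hN1pos : ∀ t ≥ (0:ℝ), 0 < N1 t)
    (hN2pos : ∀ t ≥ (0:ℝ), 0 < N2 t)
    (ε1 ε2 Z1 Z2 : ℝ)
    (hε1 : ε1 = μ1 / (γ1 + μ1)) (hε2 : ε2 = μ2 / (γ2 + μ2))
    (hZ1 : Z1 = (1 - ε1) * N1 0 + ε1 * R1 0) (hZ2 : Z2 = (1 - ε2) * N2 0 + ε2 * R2 0)
    (T : ℝ × ℝ → ℝ × ℝ)
    (hT : T = Tmap β11 β12 β21 β22 μ1 μ2 (S1 0) (S2 0) ε1 ε2 Z1 Z2 (N1 0) (N2 0))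
    (S1inf S2inf : ℝ)
    (hS1inf : Tendsto S1 atTop (nhds S1inf)) (hS2inf : Tendsto S2 atTop (nhds S2inf))
    (hI1inf : Tendsto I1 atTop (nhds 0)) (hI2inf : Tendsto I2 atTop (nhds 0))
    (hR1inf : ∃ l : ℝ, Tendsto R1 atTop (nhds l)) (hR2inf : ∃ l : ℝ, Tendsto R2 atTop (nhds l))
    (Sm Sp : ℝ × ℝ)
    (hSm : Tendsto (fun n => T^[n] (0, 0)) atTop (nhds Sm))
    (hSp : Tendsto (fun n => T^[n] (S1 0, S2 0)) atTop (nhds Sp)) :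
    (Sm.1 ≤ S1inf ∧ S1inf ≤ Sp.1) ∧ (Sm.2 ≤ S2inf ∧ S2inf ≤ Sp.2) := by
  obtain ⟨r1, hr1⟩ := hR1inf
  obtain ⟨r2, hr2⟩ := hR2inf
  have hN10 := hN1pos 0 le_rfl
  have hN20 := hN2pos 0 le_rfl
  have hN1' : ∀ t ≥ (0:ℝ), HasDerivAt N1 (-(μ1 * I1 t)) t := fun t ht =>
    hasDerivAt_active_population hN1 (hS1' t ht) (hI1' t ht) (hR1' t ht)
  have hN2' : ∀ t ≥ (0:ℝ), HasDerivAt N2 (-(μ2 * I2 t)) t := fun t ht =>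
    hasDerivAt_active_population hN2 (hS2' t ht) (hI2' t ht) (hR2' t ht)
  have hL1 : Tendsto N1 atTop (𝓝 (ε1 * S1inf + Z1)) := by
    rw [hZ1, hε1]; exact tendsto_active_population (by positivity) hN1 hN1' hR1' hS1inf hI1inf hr1
  have hL2 : Tendsto N2 atTop (𝓝 (ε2 * S2inf + Z2)) := by
    rw [hZ2, hε2]; exact tendsto_active_population (by positivity) hN2 hN2' hR2' hS2inf hI2inf hr2
  have hfix : IsFixedPt T (S1inf, S2inf) := hT ▸ Prod.ext
    (eq_mul_rpow_mul_rpow_of_tendsto hβ11.le hβ12.le hμ1 hμ2 hS1' hN1' hN2' hS1pos hN1pos hN2pos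
      hS1inf hL1 hL2).symm
    (eq_mul_rpow_mul_rpow_of_tendsto hβ21.le hβ22.le hμ1 hμ2 hS2' hN1' hN2' hS2pos hN1pos hN2pos
      hS2inf hL1 hL2).symm
  have hε1_nn : 0 ≤ ε1 := by rw [hε1]; positivity
  have hε2_nn : 0 ≤ ε2 := by rw [hε2]; positivity
  have hZ1_nn : 0 ≤ Z1 := by
    rw [hZ1, hε1, one_sub_div (by positivity), add_sub_cancel_right]; positivity
  have hZ2_nn : 0 ≤ Z2 := by
    rw [hZ2, hε2, one_sub_div (by positivity), add_sub_cancel_right]; positivity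
  have hmono : MonotoneOn T (Ici 0) := hT ▸ monotoneOn_Tmap
    hS10.le hS20.le hε1_nn hε2_nn hZ1_nn hZ2_nn hN10.le hN20.le
    (div_pos hβ11 hμ1).le (div_pos hβ12 hμ2).le (div_pos hβ21 hμ1).le (div_pos hβ22 hμ2).le
  have hmaps : MapsTo T (Ici 0) (Ici 0) := hT ▸ mapsTo_Tmap
    hS10.le hS20.le hε1_nn hε2_nn hZ1_nn hZ2_nn hN10.le hN20.le
  have hSinf_nn : (0 : ℝ × ℝ) ≤ (S1inf, S2inf) :=
    ⟨ge_of_tendsto hS1inf ((eventually_ge_atTop 0).mono fun t ht => (hS1pos t ht).le),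
      ge_of_tendsto hS2inf ((eventually_ge_atTop 0).mono fun t ht => (hS2pos t ht).le)⟩
  have hSinf_le : (S1inf, S2inf) ≤ (S1 0, S2 0) := by
    refine ⟨le_of_tendsto_of_hasDerivAt_nonpos hS1' (fun t ht => ?_) hS1inf,
      le_of_tendsto_of_hasDerivAt_nonpos hS2' (fun t ht => ?_) hS2inf⟩ <;>
    · obtain ⟨hS1t, hI1t, -⟩ := hnn1 t ht
      obtain ⟨hS2t, hI2t, -⟩ := hnn2 t ht
      have hN1t := hN1pos t ht
      have hN2t := hN2pos t ht
      rw [neg_mul, neg_nonpos]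
      positivity
  obtain ⟨hSm1, hSm2⟩ : Sm ≤ (S1inf, S2inf) :=
    le_of_tendsto' hSm (hmono.iterate_le_of_isFixedPt hmaps self_mem_Ici hSinf_nn hfix hSinf_nn)
  obtain ⟨hSp1, hSp2⟩ : (S1inf, S2inf) ≤ Sp :=
    ge_of_tendsto' hSp
      (hmono.le_iterate_of_isFixedPt hmaps (hSinf_nn.trans hSinf_le) hSinf_nn hfix hSinf_le)
  exact ⟨⟨hSm1, hSp1⟩, hSm2, hSp2⟩

theorem stmt_11
    (β11 β12 β21 β22 γ1 γ2 μ1 μ2 : ℝ)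
    (hβ11 : 0 < β11) (hβ12 : 0 < β12) (hβ21 : 0 < β21) (hβ22 : 0 < β22)
    (hγ1 : 0 < γ1) (hγ2 : 0 < γ2) (hμ1 : 0 < μ1) (hμ2 : 0 < μ2)
    (S1 S2 I1 I2 R1 R2 D1 D2 N1 N2 : ℝ → ℝ)
    (hN1 : ∀ t, N1 t = S1 t + I1 t + R1 t)
    (hN2 : ∀ t, N2 t = S2 t + I2 t + R2 t)
    (hS1' : ∀ t ≥ (0:ℝ), HasDerivAt S1 (-(β11 * I1 t / N1 t + β12 * I2 t / N2 t) * S1 t) t)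
    (hS2' : ∀ t ≥ (0:ℝ), HasDerivAt S2 (-(β21 * I1 t / N1 t + β22 * I2 t / N2 t) * S2 t) t)
    (hI1' : ∀ t ≥ (0:ℝ), HasDerivAt I1 ((β11 * I1 t / N1 t + β12 * I2 t / N2 t) * S1 t - (γ1 + μ1) * I1 t) t)
    (hI2' : ∀ t ≥ (0:ℝ), HasDerivAt I2 ((β21 * I1 t / N1 t + β22 * I2 t / N2 t) * S2 t - (γ2 + μ2) * I2 t) t)
    (hR1' : ∀ t ≥ (0:ℝ), HasDerivAt R1 (γ1 * I1 t) t)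
    (hR2' : ∀ t ≥ (0:ℝ), HasDerivAt R2 (γ2 * I2 t) t)
    (hD1' : ∀ t ≥ (0:ℝ), HasDerivAt D1 (μ1 * I1 t) t)
    (hD2' : ∀ t ≥ (0:ℝ), HasDerivAt D2 (μ2 * I2 t) t)
    (hS10 : 0 < S1 0) (hS20 : 0 < S2 0)
    (hI10 : 0 ≤ I1 0) (hI20 : 0 ≤ I2 0)
    (hR10 : 0 ≤ R1 0) (hR20 : 0 ≤ R2 0)
    (hD10 : 0 ≤ D1 0) (hD20 : 0 ≤ D2 0)
    (hnn1 : ∀ t ≥ (0:ℝ), 0 ≤ S1 t ∧ 0 ≤ I1 t ∧ 0 ≤ R1 t ∧ 0 ≤ D1 t)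
    (hnn2 : ∀ t ≥ (0:ℝ), 0 ≤ S2 t ∧ 0 ≤ I2 t ∧ 0 ≤ R2 t ∧ 0 ≤ D2 t)
    (hbd : ∃ C : ℝ, ∀ t ≥ (0:ℝ), S1 t ≤ C ∧ I1 t ≤ C ∧ R1 t ≤ C ∧ D1 t ≤ C ∧
      S2 t ≤ C ∧ I2 t ≤ C ∧ R2 t ≤ C ∧ D2 t ≤ C)
    (hS1pos : ∀ t ≥ (0:ℝ), 0 < S1 t)
    (hS2pos : ∀ t ≥ (0:ℝ), 0 < S2 t)
    (hN1pos : ∀ t ≥ (0:ℝ), 0 < N1 t)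
    (hN2pos : ∀ t ≥ (0:ℝ), 0 < N2 t)
    (ε1 ε2 Z1 Z2 : ℝ)
    (hε1 : ε1 = μ1 / (γ1 + μ1)) (hε2 : ε2 = μ2 / (γ2 + μ2))
    (hZ1 : Z1 = (1 - ε1) * N1 0 + ε1 * R1 0) (hZ2 : Z2 = (1 - ε2) * N2 0 + ε2 * R2 0)
    (T : ℝ × ℝ → ℝ × ℝ)
    (hT : T = Tmap β11 β12 β21 β22 μ1 μ2 (S1 0) (S2 0) ε1 ε2 Z1 Z2 (N1 0) (N2 0))
    (S1inf S2inf : ℝ)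
    (hS1inf : Tendsto S1 atTop (nhds S1inf)) (hS2inf : Tendsto S2 atTop (nhds S2inf))
    (hI1inf : Tendsto I1 atTop (nhds 0)) (hI2inf : Tendsto I2 atTop (nhds 0))
    (hR1inf : ∃ l : ℝ, Tendsto R1 atTop (nhds l)) (hR2inf : ∃ l : ℝ, Tendsto R2 atTop (nhds l))
    (hD1inf : ∃ l : ℝ, Tendsto D1 atTop (nhds l)) (hD2inf : ∃ l : ℝ, Tendsto D2 atTop (nhds l))
    (Sm Sp : ℝ × ℝ)
    (hSm : Tendsto (fun n => T^[n] (0, 0)) atTop (nhds Sm))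
    (hSp : Tendsto (fun n => T^[n] (S1 0, S2 0)) atTop (nhds Sp)) :
    (Sm.1 ≤ S1inf ∧ S1inf ≤ Sp.1) ∧ (Sm.2 ≤ S2inf ∧ S2inf ≤ Sp.2) :=
  stmt_11_general β11 β12 β21 β22 γ1 γ2 μ1 μ2 hβ11 hβ12 hβ21 hβ22 hγ1 hγ2 hμ1 hμ2 S1 S2 I1 I2 R1 R2
    D1 D2 N1 N2 hN1 hN2 hS1' hS2' hI1' hI2' hR1' hR2' hS10 hS20 hR10 hR20 hnn1 hnn2 hS1pos hS2pos
    hN1pos hN2pos ε1 ε2 Z1 Z2 hε1 hε2 hZ1 hZ2 T hT S1inf S2inf hS1inf hS2inf hI1inf hI2inf hR1inf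
    hR2inf Sm Sp hSm hSp
end

section
/- Let T be the final-size map built from positive parameters βᵢⱼ, γᵢ, μᵢ and initial data S₁₀, S₂₀ > 0, I₁₀, I₂₀ ≥ 0, R₁₀, R₂₀ ≥ 0, and set δ = max{β₁₁/μ₁ + β₁₂/μ₂, β₂₁/μ₁ + β₂₂/μ₂}. Then T is sub-δ-homogeneous: for every η ∈ (0,1) and every X = (x₁,x₂) ∈ ℝ²₊, one has η^δ · Tᵢ(X) < Tᵢ(ηX) for i = 1,2. -/
open Filter

/-
Each component of `T` has the form `S · A(x₁)^a · B(x₂)^b` with `a, b > 0`, `a + b ≤ δ`, and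
affine factors `A(x) = (ε x + Z)/N` whose offset `Z` is positive, so `η A(x) < A(η x)` for `η < 1`.
Hence `η^δ T_i(X) ≤ η^(a+b) S A^a B^b = S (ηA)^a (ηB)^b < S A(ηx₁)^a B(ηx₂)^b` by strict monotonicity
of positive real powers.
-/

lemma one_sub_mul_add_mul_pos {ε N R : ℝ} (hε₀ : 0 ≤ ε) (hε₁ : ε < 1) (hN : 0 < N)
    (hR : 0 ≤ R) : 0 < (1 - ε) * N + ε * R := by
  have := sub_pos.2 hε₁
  positivity

lemma mul_affine_div_lt {ε Z N η x : ℝ} (hZ : 0 < Z) (hN : 0 < N) (hη1 : η < 1) :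
    η * ((ε * x + Z) / N) < (ε * (η * x) + Z) / N := by
  rw [mul_div_assoc', div_lt_div_iff_of_pos_right hN]
  nlinarith

lemma rpow_mul_rpow_sub_homogeneous {S A B A' B' a b δ η : ℝ} (hS : 0 < S) (hA : 0 < A)
    (hB : 0 < B) (ha : 0 < a) (hb : 0 < b) (hδ : a + b ≤ δ) (hη : 0 < η) (hη1 : η < 1)
    (hA' : η * A < A') (hB' : η * B < B') :
    η ^ δ * (S * A ^ a * B ^ b) < S * A' ^ a * B' ^ b := by
  calc η ^ δ * (S * A ^ a * B ^ b) ≤ η ^ (a + b) * (S * A ^ a * B ^ b) := by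
        have hpow : η ^ δ ≤ η ^ (a + b) := Real.rpow_le_rpow_of_exponent_ge hη hη1.le hδ
        gcongr
    _ = S * (η * A) ^ a * (η * B) ^ b := by
        rw [Real.rpow_add hη, Real.mul_rpow hη.le hA.le, Real.mul_rpow hη.le hB.le]
        ring
    _ < S * A' ^ a * B' ^ b := by
        have hAa : (η * A) ^ a < A' ^ a := Real.rpow_lt_rpow (by positivity) hA' ha
        have hBb : (η * B) ^ b < B' ^ b := Real.rpow_lt_rpow (by positivity) hB' hb
        gcongr

lemma affine_rpow_mul_rpow_sub_homogeneous {S a b δ ε₁ ε₂ Z₁ Z₂ N₁ N₂ η x₁ x₂ : ℝ}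
    (hS : 0 < S) (ha : 0 < a) (hb : 0 < b) (hδ : a + b ≤ δ)
    (hε₁ : 0 ≤ ε₁) (hε₂ : 0 ≤ ε₂) (hZ₁ : 0 < Z₁) (hZ₂ : 0 < Z₂) (hN₁ : 0 < N₁) (hN₂ : 0 < N₂)
    (hη : 0 < η) (hη1 : η < 1) (hx₁ : 0 ≤ x₁) (hx₂ : 0 ≤ x₂) :
    η ^ δ * (S * ((ε₁ * x₁ + Z₁) / N₁) ^ a * ((ε₂ * x₂ + Z₂) / N₂) ^ b) <
      S * ((ε₁ * (η * x₁) + Z₁) / N₁) ^ a * ((ε₂ * (η * x₂) + Z₂) / N₂) ^ b :=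
  rpow_mul_rpow_sub_homogeneous hS (by positivity) (by positivity) ha hb hδ hη hη1
    (mul_affine_div_lt hZ₁ hN₁ hη1) (mul_affine_div_lt hZ₂ hN₂ hη1)

theorem stmt_13
    (β11 β12 β21 β22 γ1 γ2 μ1 μ2 : ℝ)
    (hβ11 : 0 < β11) (hβ12 : 0 < β12) (hβ21 : 0 < β21) (hβ22 : 0 < β22)
    (hγ1 : 0 < γ1) (hγ2 : 0 < γ2) (hμ1 : 0 < μ1) (hμ2 : 0 < μ2)
    (S10 S20 I10 I20 R10 R20 : ℝ)
    (hS10 : 0 < S10) (hS20 : 0 < S20)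
    (hI10 : 0 ≤ I10) (hI20 : 0 ≤ I20)
    (hR10 : 0 ≤ R10) (hR20 : 0 ≤ R20)
    (ε1 ε2 Z1 Z2 N10 N20 : ℝ)
    (hN10 : N10 = S10 + I10 + R10) (hN20 : N20 = S20 + I20 + R20)
    (hε1 : ε1 = μ1 / (γ1 + μ1)) (hε2 : ε2 = μ2 / (γ2 + μ2))
    (hZ1 : Z1 = (1 - ε1) * N10 + ε1 * R10) (hZ2 : Z2 = (1 - ε2) * N20 + ε2 * R20)
    (T : ℝ × ℝ → ℝ × ℝ)
    (hT : T = Tmap β11 β12 β21 β22 μ1 μ2 S10 S20 ε1 ε2 Z1 Z2 N10 N20)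
    (δ : ℝ) (hδ : δ = max (β11 / μ1 + β12 / μ2) (β21 / μ1 + β22 / μ2)) :
    ∀ η : ℝ, 0 < η → η < 1 → ∀ x1 x2 : ℝ, 0 ≤ x1 → 0 ≤ x2 →
      η ^ δ * (T (x1, x2)).1 < (T (η * x1, η * x2)).1 ∧
      η ^ δ * (T (x1, x2)).2 < (T (η * x1, η * x2)).2 := by
  intro η hη hη1 x1 x2 hx1 hx2
  have hN1_pos : 0 < N10 := by rw [hN10]; positivity
  have hN2_pos : 0 < N20 := by rw [hN20]; positivity
  have hε1_nonneg : 0 ≤ ε1 := by rw [hε1]; positivity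
  have hε2_nonneg : 0 ≤ ε2 := by rw [hε2]; positivity
  have hε1_lt : ε1 < 1 := by rw [hε1, div_lt_one (by positivity)]; linarith
  have hε2_lt : ε2 < 1 := by rw [hε2, div_lt_one (by positivity)]; linarith
  have hZ1_pos : 0 < Z1 := hZ1 ▸ one_sub_mul_add_mul_pos hε1_nonneg hε1_lt hN1_pos hR10
  have hZ2_pos : 0 < Z2 := hZ2 ▸ one_sub_mul_add_mul_pos hε2_nonneg hε2_lt hN2_pos hR20
  subst hT hδ
  exact ⟨affine_rpow_mul_rpow_sub_homogeneous hS10 (by positivity) (by positivity)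
      (le_max_left _ _) hε1_nonneg hε2_nonneg hZ1_pos hZ2_pos hN1_pos hN2_pos hη hη1 hx1 hx2,
    affine_rpow_mul_rpow_sub_homogeneous hS20 (by positivity) (by positivity)
      (le_max_right _ _) hε1_nonneg hε2_nonneg hZ1_pos hZ2_pos hN1_pos hN2_pos hη hη1 hx1 hx2⟩
end
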